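/- arXiv:1304.7172 — 6 statements merged into one kernel-verified Lean document; each statement's English description precedes it below -/
import Mathlib

section
/- For fractional Brownian motion with H < 1/2, there is a constant C > 0 such that for all t ∈ [0,T], all n ≥ 2, and all integers j ≥ 1, |E[ΔB_{j/n} B_t]| ≤ C n^{-2H} (j^{2H-1} + |j - nt|^{2H-1}), where the second term is interpreted as bounded when |j - nt| ≤ 1. -/
/-!
Write `p = 2H ∈ (0, 1)` and `g x = |x + 1| ^ p - |x| ^ p`. By self-similarity of the
covariance, `E[ΔB_{j/n} B_t] = n^{-p} (g j - g (j - n t)) / 2`, so it suffices that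
`|g x| ≤ 2 max(|x|, 1)^{p-1}`. For `|x| ≤ 2` this follows from the `p`-Hölder continuity of
`y ↦ y ^ p` on `[0, ∞)`; for `|x| > 2` both `|x|` and `|x + 1|` are at least `|x| / 2`, where
the tangent-line inequality of the concave function `y ↦ y ^ p` gives the Lipschitz constant
`p (|x| / 2)^{p-1}`.
-/

open MeasureTheory

theorem abs_rpow_sub_rpow_le_abs_sub_rpow {p x y : ℝ} (hp0 : 0 ≤ p) (hp1 : p ≤ 1)
    (hx : 0 ≤ x) (hy : 0 ≤ y) : |x ^ p - y ^ p| ≤ |x - y| ^ p := by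
  have key : ∀ a b : ℝ, 0 ≤ a → 0 ≤ b → a ^ p - b ^ p ≤ |a - b| ^ p := by
    intro a b ha hb
    have : a ^ p ≤ |a - b| ^ p + b ^ p := calc
      a ^ p ≤ (|a - b| + b) ^ p := by gcongr; linarith [le_abs_self (a - b)]
      _ ≤ |a - b| ^ p + b ^ p := Real.rpow_add_le_add_rpow (abs_nonneg _) hb hp0 hp1
    linarith
  exact abs_sub_le_iff.2 ⟨key x y hx hy, abs_sub_comm x y ▸ key y x hy hx⟩

theorem rpow_sub_rpow_le_mul_rpow_sub_one_mul {p x y : ℝ} (hp0 : 0 ≤ p) (hp1 : p ≤ 1)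
    (hx : 0 ≤ x) (hy : 0 < y) : x ^ p - y ^ p ≤ p * y ^ (p - 1) * (x - y) := by
  have bernoulli := rpow_one_add_le_one_add_mul_self
    (by rw [le_div_iff₀ hy]; linarith : -1 ≤ (x - y) / y) hp0 hp1
  rw [show 1 + (x - y) / y = x / y by field_simp; ring, Real.div_rpow hx hy.le,
    div_le_iff₀ (by positivity)] at bernoulli
  rw [Real.rpow_sub_one hy.ne']
  have hslope : y ^ p * ((x - y) / y) = y ^ p / y * (x - y) := by ring
  nlinarith

theorem abs_rpow_sub_rpow_le_mul_abs_sub {p m x y : ℝ} (hp0 : 0 ≤ p) (hp1 : p ≤ 1)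
    (hm : 0 < m) (hx : m ≤ x) (hy : m ≤ y) : |x ^ p - y ^ p| ≤ p * m ^ (p - 1) * |x - y| := by
  have key : ∀ a b : ℝ, m ≤ a → m ≤ b → a ^ p - b ^ p ≤ p * m ^ (p - 1) * |a - b| :=
    fun a b ha hb => calc
      a ^ p - b ^ p ≤ p * b ^ (p - 1) * (a - b) :=
        rpow_sub_rpow_le_mul_rpow_sub_one_mul hp0 hp1 (by linarith) (by linarith)
      _ ≤ p * b ^ (p - 1) * |a - b| := mul_le_mul_of_nonneg_left (le_abs_self _)
        (mul_nonneg hp0 (Real.rpow_nonneg (by linarith) _))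
      _ ≤ p * m ^ (p - 1) * |a - b| := by
        gcongr p * ?_ * _
        exact Real.rpow_le_rpow_of_nonpos hm hb (by linarith)
  exact abs_sub_le_iff.2 ⟨key x y hx hy, abs_sub_comm x y ▸ key y x hy hx⟩

noncomputable def absRpowIncrement (p x : ℝ) : ℝ := |x + 1| ^ p - |x| ^ p

theorem abs_absRpowIncrement_le {p : ℝ} (hp0 : 0 ≤ p) (hp1 : p ≤ 1) (x : ℝ) :
    |absRpowIncrement p x| ≤ 2 * max |x| 1 ^ (p - 1) := by
  have hstep : |(|x + 1|) - (|x|)| ≤ 1 := by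
    simpa using abs_abs_sub_abs_le_abs_sub (x + 1) x
  have htwo : 1 ≤ 2 * (2 : ℝ) ^ (p - 1) := by
    rw [Real.rpow_sub_one two_ne_zero, mul_div_cancel₀ _ two_ne_zero]
    exact Real.one_le_rpow one_le_two hp0
  rcases le_or_gt |x| 2 with hsmall | hlarge
  · calc |absRpowIncrement p x| ≤ |(|x + 1|) - (|x|)| ^ p :=
          abs_rpow_sub_rpow_le_abs_sub_rpow hp0 hp1 (abs_nonneg _) (abs_nonneg _)
      _ ≤ 1 := Real.rpow_le_one (abs_nonneg _) hstep hp0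
      _ ≤ 2 * (2 : ℝ) ^ (p - 1) := htwo
      _ ≤ 2 * max |x| 1 ^ (p - 1) := by
        gcongr 2 * ?_
        exact Real.rpow_le_rpow_of_nonpos (by positivity) (max_le hsmall one_le_two)
          (by linarith)
  · have hx1 : |x| / 2 ≤ |x + 1| := by
      have h := abs_sub_abs_le_abs_sub x (-1)
      rw [sub_neg_eq_add, abs_neg, abs_one] at h
      linarith
    calc |absRpowIncrement p x| ≤ p * (|x| / 2) ^ (p - 1) * |(|x + 1|) - (|x|)| :=
          abs_rpow_sub_rpow_le_mul_abs_sub hp0 hp1 (by positivity) hx1 (by linarith)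
      _ ≤ 1 * (|x| / 2) ^ (p - 1) * 1 := by gcongr
      _ = |x| ^ (p - 1) / (2 : ℝ) ^ (p - 1) := by
        rw [Real.div_rpow (abs_nonneg x) zero_le_two]; ring
      _ ≤ 2 * max |x| 1 ^ (p - 1) := by
        rw [max_eq_left (by linarith), div_le_iff₀ (by positivity)]
        nlinarith [Real.rpow_nonneg (abs_nonneg x) (p - 1)]

noncomputable def fbmCovariance (H s t : ℝ) : ℝ :=
  (s ^ (2 * H) + t ^ (2 * H) - |t - s| ^ (2 * H)) / 2

theorem fbmCovariance_add_one_div_sub_fbmCovariance_div {H a n : ℝ} (ha : 0 ≤ a) (hn : 0 < n)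
    (t : ℝ) : fbmCovariance H ((a + 1) / n) t - fbmCovariance H (a / n) t
      = n ^ (-(2 * H)) / 2
        * (absRpowIncrement (2 * H) a - absRpowIncrement (2 * H) (a - n * t)) := by
  have hdist : ∀ b : ℝ, |t - b / n| = |b - n * t| / n := fun b => by
    rw [← abs_neg, show -(t - b / n) = (b - n * t) / n by field_simp; ring, abs_div,
      abs_of_pos hn]
  unfold fbmCovariance absRpowIncrement
  rw [hdist, hdist, sub_add_eq_add_sub, Real.div_rpow (abs_nonneg _) hn.le,
    Real.div_rpow (abs_nonneg _) hn.le, Real.div_rpow (by linarith) hn.le,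
    Real.div_rpow ha hn.le, abs_of_nonneg ha, abs_of_nonneg (by linarith : 0 ≤ a + 1),
    Real.rpow_neg hn.le]
  ring

theorem fbm_increment_process_covariance_decay_general
    {Ω : Type*} [MeasurableSpace Ω] (μ : Measure Ω)
    (H : ℝ) (hH0 : 0 < H) (hH1 : H < 1/2) (T : ℝ)
    (B : ℝ → Ω → ℝ)
    (hint : ∀ s t : ℝ, Integrable (fun ω => B s ω * B t ω) μ)
    (hcov : ∀ s t : ℝ, 0 ≤ s → 0 ≤ t →
      ∫ ω, B s ω * B t ω ∂μ = (s ^ (2*H) + t ^ (2*H) - |t - s| ^ (2*H)) / 2) :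
    ∃ C : ℝ, 0 < C ∧ ∀ t ∈ Set.Icc (0:ℝ) T, ∀ (n j : ℕ), 2 ≤ n → 1 ≤ j →
      |∫ ω, (B (((j:ℝ)+1)/n) ω - B ((j:ℝ)/n) ω) * B t ω ∂μ|
        ≤ C * (n : ℝ) ^ (-(2*H))
          * ((j:ℝ) ^ (2*H - 1) + (max |(j:ℝ) - n*t| 1) ^ (2*H - 1)) := by
  refine ⟨1, one_pos, fun t ht n j hn hj => ?_⟩
  have hn0 : (0 : ℝ) < n := Nat.cast_pos.2 (by omega)
  have hj1 : (1 : ℝ) ≤ j := Nat.one_le_cast.2 hj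
  have hcovt : ∀ s, 0 ≤ s → ∫ ω, B s ω * B t ω ∂μ = fbmCovariance H s t :=
    fun s hs => hcov s t hs ht.1
  have hgj := abs_absRpowIncrement_le (p := 2 * H) (by linarith) (by linarith) (j : ℝ)
  rw [Nat.abs_cast, max_eq_left hj1] at hgj
  have hgt :=
    abs_absRpowIncrement_le (p := 2 * H) (by linarith) (by linarith) ((j : ℝ) - n * t)
  simp_rw [sub_mul]
  rw [integral_sub (hint _ _) (hint _ _), hcovt _ (by positivity), hcovt _ (by positivity),
    fbmCovariance_add_one_div_sub_fbmCovariance_div (by positivity) hn0, abs_mul,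
    abs_of_pos (by positivity)]
  calc (n : ℝ) ^ (-(2 * H)) / 2
        * |absRpowIncrement (2 * H) j - absRpowIncrement (2 * H) (j - n * t)|
      ≤ (n : ℝ) ^ (-(2 * H)) / 2
        * (|absRpowIncrement (2 * H) j| + |absRpowIncrement (2 * H) (j - n * t)|) := by
        gcongr; exact abs_sub _ _
    _ ≤ (n : ℝ) ^ (-(2 * H)) / 2
        * (2 * (j : ℝ) ^ (2 * H - 1) + 2 * max |(j : ℝ) - n * t| 1 ^ (2 * H - 1)) := by
        gcongr
    _ = _ := by ring

/-- For fBm with `H < 1/2`, there is a constant `C > 0` such that for all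
`t ∈ [0,T]`, `n ≥ 2` and `j ≥ 1`,
`|E[ΔB_{j/n} B_t]| ≤ C n^{-2H} (j^{2H-1} + |j - nt|^{2H-1})`, where the second
term is interpreted as bounded (i.e. `|j - nt|` is replaced by `max |j - nt| 1`)
when `|j - nt| ≤ 1`. -/
theorem fbm_increment_process_covariance_decay
    {Ω : Type*} [MeasurableSpace Ω] (μ : Measure Ω) [IsProbabilityMeasure μ]
    (H : ℝ) (hH0 : 0 < H) (hH1 : H < 1/2) (T : ℝ) (hT : 0 < T)
    (B : ℝ → Ω → ℝ)
    (hint : ∀ s t : ℝ, Integrable (fun ω => B s ω * B t ω) μ)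
    (hcov : ∀ s t : ℝ, 0 ≤ s → 0 ≤ t →
      ∫ ω, B s ω * B t ω ∂μ = (s ^ (2*H) + t ^ (2*H) - |t - s| ^ (2*H)) / 2) :
    ∃ C : ℝ, 0 < C ∧ ∀ t ∈ Set.Icc (0:ℝ) T, ∀ (n j : ℕ), 2 ≤ n → 1 ≤ j →
      |∫ ω, (B (((j:ℝ)+1)/n) ω - B ((j:ℝ)/n) ω) * B t ω ∂μ|
        ≤ C * (n : ℝ) ^ (-(2*H))
          * ((j:ℝ) ^ (2*H - 1) + (max |(j:ℝ) - n*t| 1) ^ (2*H - 1)) :=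
  fbm_increment_process_covariance_decay_general μ H hH0 hH1 T B hint hcov
end

section
/- Let H < 1/2 and 0 < t ≤ T. There is a constant C (depending on H, T, r) such that for every fixed s ∈ [0,T], every integer r ≥ 1 and every integer n ≥ 2, the sum over j = 0 to ⌊nt⌋ - 1 of |E[ΔB_{j/n} B_s]|^r is at most C n^{-2(r-1)H}. -/
/-!
With `p = 2H ≤ 1` and `R = fbmCov H`, the covariance `ρ_j = E[ΔB_{j/n} B_s]` is the increment
`R((j+1)/n, s) - R(j/n, s)`. Since `x ↦ x ^ p` is `p`-Hölder with constant one, `|ρ_j| ≤ n^{-p}`.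
Splitting `|u - s| ^ p = ((u - s)⁺) ^ p + ((u - s)⁻) ^ p` writes `R(·, s)` as a combination of three
monotone functions with values in `[0, T ^ p]` on `[0, T]`, so `∑ |ρ_j| ≤ 3 T ^ p / 2`. Hence
`∑ |ρ_j| ^ r ≤ (max |ρ_j|) ^ (r - 1) ∑ |ρ_j| ≤ (3 T ^ p / 2) n^{-p(r-1)}`.
-/

open MeasureTheory Finset

lemma Finset.sum_abs_pow_succ_le {ι : Type*} (s : Finset ι) (a : ι → ℝ) {D S : ℝ} (hD0 : 0 ≤ D)
    (hD : ∀ i ∈ s, |a i| ≤ D) (hS : ∑ i ∈ s, |a i| ≤ S) (k : ℕ) :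
    ∑ i ∈ s, |a i| ^ (k + 1) ≤ D ^ k * S :=
  calc ∑ i ∈ s, |a i| ^ (k + 1) = ∑ i ∈ s, |a i| ^ k * |a i| := by simp_rw [pow_succ]
    _ ≤ ∑ i ∈ s, D ^ k * |a i| := sum_le_sum fun i hi =>
        mul_le_mul_of_nonneg_right (pow_le_pow_left₀ (abs_nonneg _) (hD i hi) k) (abs_nonneg _)
    _ = D ^ k * ∑ i ∈ s, |a i| := (mul_sum _ _ _).symm
    _ ≤ D ^ k * S := mul_le_mul_of_nonneg_left hS (pow_nonneg hD0 k)

section Grid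

variable {α : Type*} [Preorder α] {f : α → ℝ} {a b : α} {x : ℕ → α} {m : ℕ}

theorem MonotoneOn.sum_abs_sub_comp_le (hf : MonotoneOn f (Set.Icc a b)) (hx : Monotone x)
    (ha : a ≤ x 0) (hb : x m ≤ b) :
    ∑ i ∈ range m, |f (x (i + 1)) - f (x i)| ≤ f b - f a := by
  have hmem : ∀ i ≤ m, x i ∈ Set.Icc a b := fun i hi =>
    ⟨ha.trans (hx (Nat.zero_le i)), (hx hi).trans hb⟩
  have hterm : ∀ i ∈ range m, |f (x (i + 1)) - f (x i)| = f (x (i + 1)) - f (x i) :=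
    fun i hi => abs_of_nonneg <| sub_nonneg.2 <|
      hf (hmem i (mem_range.1 hi).le) (hmem (i + 1) (mem_range.1 hi)) (hx i.le_succ)
  rw [sum_congr rfl hterm, sum_range_sub (fun i => f (x i))]
  have hab : a ≤ b := ha.trans ((hx (Nat.zero_le m)).trans hb)
  have hfa := hf ⟨le_rfl, hab⟩ (hmem 0 (Nat.zero_le m)) ha
  have hfb := hf (hmem m le_rfl) ⟨hab, le_rfl⟩ hb
  linarith

theorem AntitoneOn.sum_abs_sub_comp_le (hf : AntitoneOn f (Set.Icc a b)) (hx : Monotone x)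
    (ha : a ≤ x 0) (hb : x m ≤ b) :
    ∑ i ∈ range m, |f (x (i + 1)) - f (x i)| ≤ f a - f b := by
  simpa [neg_add_eq_sub, abs_sub_comm] using hf.neg.sum_abs_sub_comp_le hx ha hb

end Grid

lemma abs_rpow_sub_rpow_le {p : ℝ} (hp0 : 0 ≤ p) (hp1 : p ≤ 1) {x y : ℝ} (hx : 0 ≤ x)
    (hy : 0 ≤ y) : |x ^ p - y ^ p| ≤ |x - y| ^ p := by
  wlog hyx : y ≤ x generalizing x y
  · rw [abs_sub_comm, abs_sub_comm x]
    exact this hy hx (le_of_not_ge hyx)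
  have hmono : y ^ p ≤ x ^ p := Real.rpow_le_rpow hy hyx hp0
  have hsubadd : x ^ p ≤ y ^ p + (x - y) ^ p := by
    simpa using Real.rpow_add_le_add_rpow hy (sub_nonneg.2 hyx) hp0 hp1
  rw [abs_of_nonneg (sub_nonneg.2 hmono), abs_of_nonneg (sub_nonneg.2 hyx)]
  linarith

lemma abs_rpow_eq_posPart_rpow_add_negPart_rpow {p : ℝ} (hp : p ≠ 0) (z : ℝ) :
    |z| ^ p = z⁺ ^ p + z⁻ ^ p := by
  rcases le_total 0 z with hz | hz
  · rw [negPart_eq_zero.2 hz, posPart_eq_self.2 hz, abs_of_nonneg hz, Real.zero_rpow hp, add_zero]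
  · rw [posPart_eq_zero.2 hz, negPart_eq_neg.2 hz, abs_of_nonpos hz, Real.zero_rpow hp, zero_add]

noncomputable def fbmCov (H s t : ℝ) : ℝ :=
  (s ^ (2 * H) + t ^ (2 * H) - |t - s| ^ (2 * H)) / 2

section FbmCov

variable {H : ℝ}

lemma abs_fbmCov_sub_fbmCov_le (hH0 : 0 ≤ H) (hH1 : H ≤ 1 / 2) {u v : ℝ} (hu : 0 ≤ u)
    (hv : 0 ≤ v) (s : ℝ) : |fbmCov H v s - fbmCov H u s| ≤ |v - u| ^ (2 * H) := by
  have hp0 : 0 ≤ 2 * H := by linarith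
  have hp1 : 2 * H ≤ 1 := by linarith
  have hpow := abs_rpow_sub_rpow_le hp0 hp1 hv hu
  have hdist : |(|s - v| ^ (2 * H) - |s - u| ^ (2 * H))| ≤ |v - u| ^ (2 * H) :=
    calc _ ≤ |(|s - v| - |s - u|)| ^ (2 * H) :=
          abs_rpow_sub_rpow_le hp0 hp1 (abs_nonneg _) (abs_nonneg _)
      _ ≤ |v - u| ^ (2 * H) := by
          refine Real.rpow_le_rpow (abs_nonneg _) ?_ hp0
          simpa [abs_sub_comm] using abs_abs_sub_abs_le_abs_sub (s - v) (s - u)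
  have hsplit : fbmCov H v s - fbmCov H u s
      = ((v ^ (2 * H) - u ^ (2 * H)) - (|s - v| ^ (2 * H) - |s - u| ^ (2 * H))) / 2 := by
    unfold fbmCov; ring
  rw [hsplit, abs_div, abs_two]
  linarith [abs_sub (v ^ (2 * H) - u ^ (2 * H)) (|s - v| ^ (2 * H) - |s - u| ^ (2 * H))]

lemma sum_abs_fbmCov_sub_le (hH0 : 0 < H) {s T : ℝ} (hs0 : 0 ≤ s) (hsT : s ≤ T) {x : ℕ → ℝ}
    (hx : Monotone x) {m : ℕ} (hx0 : 0 ≤ x 0) (hxT : x m ≤ T) :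
    ∑ i ∈ range m, |fbmCov H (x (i + 1)) s - fbmCov H (x i) s| ≤ 3 * T ^ (2 * H) / 2 := by
  have hp : 0 < 2 * H := by positivity
  set f₁ : ℝ → ℝ := fun u => u ^ (2 * H)
  set f₂ : ℝ → ℝ := fun u => (u - s)⁺ ^ (2 * H)
  set f₃ : ℝ → ℝ := fun u => (u - s)⁻ ^ (2 * H)
  have hdecomp : ∀ u v, fbmCov H v s - fbmCov H u s
      = ((f₁ v - f₁ u) - (f₂ v - f₂ u) - (f₃ v - f₃ u)) / 2 := fun u v => by
    simp only [fbmCov, f₁, f₂, f₃, abs_sub_comm s,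
      abs_rpow_eq_posPart_rpow_add_negPart_rpow hp.ne']
    ring
  have hle : ∀ u v, |fbmCov H v s - fbmCov H u s|
      ≤ (|f₁ v - f₁ u| + |f₂ v - f₂ u| + |f₃ v - f₃ u|) / 2 := fun u v => by
    rw [hdecomp, abs_div, abs_two]
    gcongr
    exact (abs_sub _ _).trans (by gcongr; exact abs_sub _ _)
  have hmono₁ : MonotoneOn f₁ (Set.Icc 0 T) :=
    (Real.monotoneOn_rpow_Ici_of_exponent_nonneg hp.le).mono Set.Icc_subset_Ici_self
  have hmono₂ : MonotoneOn f₂ (Set.Icc 0 T) := fun u _ v _ huv =>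
    Real.rpow_le_rpow (posPart_nonneg _) (posPart_mono (sub_le_sub_right huv s)) hp.le
  have hanti₃ : AntitoneOn f₃ (Set.Icc 0 T) := fun u _ v _ huv =>
    Real.rpow_le_rpow (negPart_nonneg _) (negPart_anti (sub_le_sub_right huv s)) hp.le
  have hf₁ : f₁ T - f₁ 0 ≤ T ^ (2 * H) := by simp [f₁, Real.zero_rpow hp.ne']
  have hf₂ : f₂ T - f₂ 0 ≤ T ^ (2 * H) := by
    have : (T - s)⁺ ≤ T := by rw [posPart_def]; exact sup_le (by linarith) (hs0.trans hsT)
    simp only [f₂, zero_sub, posPart_eq_zero.2 (neg_nonpos.2 hs0), Real.zero_rpow hp.ne',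
      sub_zero]
    exact Real.rpow_le_rpow (posPart_nonneg _) this hp.le
  have hf₃ : f₃ 0 - f₃ T ≤ T ^ (2 * H) := by
    simp only [f₃, zero_sub, negPart_eq_zero.2 (sub_nonneg.2 hsT), Real.zero_rpow hp.ne',
      sub_zero]
    exact Real.rpow_le_rpow (negPart_nonneg _) (by simpa [posPart_eq_self.2 hs0] using hsT) hp.le
  calc ∑ i ∈ range m, |fbmCov H (x (i + 1)) s - fbmCov H (x i) s|
      ≤ ∑ i ∈ range m, (|f₁ (x (i + 1)) - f₁ (x i)| + |f₂ (x (i + 1)) - f₂ (x i)|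
          + |f₃ (x (i + 1)) - f₃ (x i)|) / 2 := sum_le_sum fun i _ => hle _ _
    _ = (∑ i ∈ range m, |f₁ (x (i + 1)) - f₁ (x i)| + ∑ i ∈ range m, |f₂ (x (i + 1)) - f₂ (x i)|
          + ∑ i ∈ range m, |f₃ (x (i + 1)) - f₃ (x i)|) / 2 := by
        rw [← sum_div, sum_add_distrib, sum_add_distrib]
    _ ≤ ((f₁ T - f₁ 0) + (f₂ T - f₂ 0) + (f₃ 0 - f₃ T)) / 2 := by
        gcongr
        · exact hmono₁.sum_abs_sub_comp_le hx hx0 hxT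
        · exact hmono₂.sum_abs_sub_comp_le hx hx0 hxT
        · exact hanti₃.sum_abs_sub_comp_le hx hx0 hxT
    _ ≤ 3 * T ^ (2 * H) / 2 := by linarith

end FbmCov

lemma integral_sub_mul_eq_fbmCov_sub {Ω : Type*} [MeasurableSpace Ω] {μ : Measure Ω} {H : ℝ}
    {B : ℝ → Ω → ℝ} (hint : ∀ s u : ℝ, Integrable (fun ω => B s ω * B u ω) μ)
    (hcov : ∀ s u : ℝ, 0 ≤ s → 0 ≤ u → ∫ ω, B s ω * B u ω ∂μ = fbmCov H s u) {u v s : ℝ}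
    (hu : 0 ≤ u) (hv : 0 ≤ v) (hs : 0 ≤ s) :
    ∫ ω, (B v ω - B u ω) * B s ω ∂μ = fbmCov H v s - fbmCov H u s := by
  simp_rw [sub_mul]
  rw [integral_sub (hint v s) (hint u s), hcov v s hv hs, hcov u s hu hs]

theorem fbm_sum_increment_covariance_power_bound_general
    {Ω : Type*} [MeasurableSpace Ω] (μ : Measure Ω)
    (H : ℝ) (hH0 : 0 < H) (hH1 : H < 1/2) (T t : ℝ) (ht : 0 < t) (htT : t ≤ T)
    (B : ℝ → Ω → ℝ)
    (hint : ∀ s u : ℝ, Integrable (fun ω => B s ω * B u ω) μ)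
    (hcov : ∀ s u : ℝ, 0 ≤ s → 0 ≤ u →
      ∫ ω, B s ω * B u ω ∂μ = (s ^ (2*H) + u ^ (2*H) - |u - s| ^ (2*H)) / 2)
    (r : ℕ) (hr : 1 ≤ r) :
    ∃ C : ℝ, 0 < C ∧ ∀ s ∈ Set.Icc (0:ℝ) T, ∀ n : ℕ, 2 ≤ n →
      ∑ j ∈ Finset.range ⌊(n:ℝ)*t⌋₊,
        |∫ ω, (B (((j:ℝ)+1)/n) ω - B ((j:ℝ)/n) ω) * B s ω ∂μ| ^ r
        ≤ C * (n : ℝ) ^ (-(2*((r:ℝ)-1)*H)) := by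
  obtain ⟨k, rfl⟩ := Nat.exists_eq_add_of_le' hr
  have hT : 0 < T := ht.trans_le htT
  refine ⟨3 * T ^ (2 * H) / 2, by positivity, fun s ⟨hs0, hsT⟩ n hn => ?_⟩
  have hn0 : (0 : ℝ) < n := by positivity
  set x : ℕ → ℝ := fun j => j / n
  have hx_succ : ∀ j : ℕ, x (j + 1) = ((j : ℝ) + 1) / n := fun j => by simp [x]
  have hρ : ∀ j : ℕ, ∫ ω, (B (((j:ℝ)+1)/n) ω - B ((j:ℝ)/n) ω) * B s ω ∂μ
      = fbmCov H (x (j + 1)) s - fbmCov H (x j) s := fun j => by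
    rw [hx_succ]
    exact integral_sub_mul_eq_fbmCov_sub hint hcov (by positivity) (by positivity) hs0
  have hstep : ∀ j : ℕ, |fbmCov H (x (j + 1)) s - fbmCov H (x j) s| ≤ (n : ℝ) ^ (-(2 * H)) :=
    fun j => by
      have hgap : |x (j + 1) - x j| = (n : ℝ)⁻¹ := by
        rw [hx_succ, ← sub_div, add_sub_cancel_left, one_div, abs_of_pos (inv_pos.2 hn0)]
      calc _ ≤ |x (j + 1) - x j| ^ (2 * H) :=
            abs_fbmCov_sub_fbmCov_le hH0.le hH1.le (by positivity) (by positivity) s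
        _ = (n : ℝ) ^ (-(2 * H)) := by rw [hgap, Real.inv_rpow hn0.le, Real.rpow_neg hn0.le]
  have hgrid_end : x ⌊(n : ℝ) * t⌋₊ ≤ T := by
    rw [div_le_iff₀ hn0]
    nlinarith [Nat.floor_le (by positivity : 0 ≤ (n : ℝ) * t)]
  have hvar := sum_abs_fbmCov_sub_le hH0 hs0 hsT (fun i j hij => by simp only [x]; gcongr)
    (by simp [x]) hgrid_end
  simp_rw [hρ]
  calc _ ≤ ((n : ℝ) ^ (-(2 * H))) ^ k * (3 * T ^ (2 * H) / 2) :=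
        sum_abs_pow_succ_le _ _ (by positivity) (fun j _ => hstep j) hvar k
    _ = _ := by
        rw [← Real.rpow_natCast, ← Real.rpow_mul hn0.le, mul_comm]
        push_cast
        ring_nf

/-- Lemma 2.6(a): for fBm with `H < 1/2` and `0 < t ≤ T`, for fixed `r ≥ 1`
there is `C` such that for every `s ∈ [0,T]` and `n ≥ 2`,
`∑_{j=0}^{⌊nt⌋-1} |E[ΔB_{j/n} B_s]|^r ≤ C n^{-2(r-1)H}`. -/
theorem fbm_sum_increment_covariance_power_bound
    {Ω : Type*} [MeasurableSpace Ω] (μ : Measure Ω) [IsProbabilityMeasure μ]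
    (H : ℝ) (hH0 : 0 < H) (hH1 : H < 1/2) (T t : ℝ) (ht : 0 < t) (htT : t ≤ T)
    (B : ℝ → Ω → ℝ)
    (hint : ∀ s u : ℝ, Integrable (fun ω => B s ω * B u ω) μ)
    (hcov : ∀ s u : ℝ, 0 ≤ s → 0 ≤ u →
      ∫ ω, B s ω * B u ω ∂μ = (s ^ (2*H) + u ^ (2*H) - |u - s| ^ (2*H)) / 2)
    (r : ℕ) (hr : 1 ≤ r) :
    ∃ C : ℝ, 0 < C ∧ ∀ s ∈ Set.Icc (0:ℝ) T, ∀ n : ℕ, 2 ≤ n →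
      ∑ j ∈ Finset.range ⌊(n:ℝ)*t⌋₊,
        |∫ ω, (B (((j:ℝ)+1)/n) ω - B ((j:ℝ)/n) ω) * B s ω ∂μ| ^ r
        ≤ C * (n : ℝ) ^ (-(2*((r:ℝ)-1)*H)) :=
  fbm_sum_increment_covariance_power_bound_general μ H hH0 hH1 T t ht htT B hint hcov r hr
end

section
/- Let H < 1/2 and 0 < t ≤ T. For every integer r ≥ 1 there exists C such that for all n ≥ 2, the sum over j = 0 to ⌊nt⌋ - 1 of |E[ΔB_{j/n} · (B_{j/n} + B_{(j+1)/n})/2]|^r is at most C n^{-2(r-1)H}. -/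
/-!
The expectation in the `j`-th summand is `(g (j+1) - g j)` for `g j = (j/n)^(2H) / 2`, a
nondecreasing sequence. By subadditivity of `x ↦ x^(2H)` (here `2H ≤ 1`) every increment is at
most `n^(-2H)`, so the sum of `r`-th powers is at most `n^(-2(r-1)H)` times the telescoped sum
`g ⌊nt⌋ ≤ t^(2H) / 2`.
-/

open MeasureTheory Finset

lemma integral_sub_mul_midpoint {Ω : Type*} [MeasurableSpace Ω] {μ : Measure Ω}
    {X Y : Ω → ℝ} (hX : Integrable (fun ω => X ω * X ω) μ)
    (hY : Integrable (fun ω => Y ω * Y ω) μ) :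
    ∫ ω, (Y ω - X ω) * ((X ω + Y ω) / 2) ∂μ
      = (∫ ω, Y ω * Y ω ∂μ - ∫ ω, X ω * X ω ∂μ) / 2 := by
  have hpoint : (fun ω => (Y ω - X ω) * ((X ω + Y ω) / 2))
      = fun ω => (Y ω * Y ω - X ω * X ω) / 2 := by
    funext ω; ring
  rw [hpoint, integral_div, integral_sub hY hX]

lemma integral_increment_mul_midpoint_eq {Ω : Type*} [MeasurableSpace Ω] {μ : Measure Ω}
    {H : ℝ} (hH : H ≠ 0) {B : ℝ → Ω → ℝ}
    (hint : ∀ s u : ℝ, Integrable (fun ω => B s ω * B u ω) μ)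
    (hcov : ∀ s u : ℝ, 0 ≤ s → 0 ≤ u →
      ∫ ω, B s ω * B u ω ∂μ = (s ^ (2*H) + u ^ (2*H) - |u - s| ^ (2*H)) / 2)
    {s u : ℝ} (hs : 0 ≤ s) (hu : 0 ≤ u) :
    ∫ ω, (B u ω - B s ω) * ((B s ω + B u ω) / 2) ∂μ = (u ^ (2*H) - s ^ (2*H)) / 2 := by
  have hvar : ∀ v : ℝ, 0 ≤ v → ∫ ω, B v ω * B v ω ∂μ = v ^ (2*H) := by
    intro v hv
    rw [hcov v v hv hv, sub_self, abs_zero, Real.zero_rpow (mul_ne_zero two_ne_zero hH)]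
    ring
  rw [integral_sub_mul_midpoint (hint s s) (hint u u), hvar u hu, hvar s hs]

lemma sum_pow_succ_sub_le_mul_sub {g : ℕ → ℝ} (hg : Monotone g) {M : ℝ}
    (hM : ∀ j, g (j+1) - g j ≤ M) (k m : ℕ) :
    ∑ j ∈ range m, (g (j+1) - g j) ^ (k+1) ≤ M ^ k * (g m - g 0) := by
  have hinc : ∀ j, 0 ≤ g (j+1) - g j := fun j => sub_nonneg.mpr (hg j.le_succ)
  calc ∑ j ∈ range m, (g (j+1) - g j) ^ (k+1)
      ≤ ∑ j ∈ range m, M ^ k * (g (j+1) - g j) := by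
        refine sum_le_sum fun j _ => ?_
        rw [pow_succ]
        exact mul_le_mul_of_nonneg_right (pow_le_pow_left₀ (hinc j) (hM j) k) (hinc j)
    _ = M ^ k * (g m - g 0) := by rw [← mul_sum, sum_range_sub]

lemma monotone_natCast_div_rpow {p : ℝ} (hp : 0 ≤ p) (n : ℕ) :
    Monotone fun j : ℕ => ((j : ℝ) / n) ^ p := fun _ _ hij =>
  Real.rpow_le_rpow (by positivity) (by gcongr) hp

lemma natCast_succ_div_rpow_sub_le {p : ℝ} (hp0 : 0 ≤ p) (hp1 : p ≤ 1) {n : ℕ} (hn : 0 < n)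
    (j : ℕ) : (((j : ℝ) + 1) / n) ^ p - ((j : ℝ) / n) ^ p ≤ (n : ℝ) ^ (-p) := by
  have hsplit : ((j : ℝ) + 1) / n = j / n + (n : ℝ)⁻¹ := by ring
  have hsub := Real.rpow_add_le_add_rpow (a := (j : ℝ) / n) (b := (n : ℝ)⁻¹)
    (by positivity) (by positivity) hp0 hp1
  rw [← hsplit, Real.inv_rpow (Nat.cast_nonneg n), ← Real.rpow_neg (Nat.cast_nonneg n)] at hsub
  linarith

lemma natFloor_mul_div_le {n : ℕ} (hn : 0 < n) {t : ℝ} (ht : 0 ≤ t) :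
    (⌊(n : ℝ) * t⌋₊ : ℝ) / n ≤ t := by
  rw [div_le_iff₀ (by positivity), mul_comm t]
  exact Nat.floor_le (by positivity)

theorem fbm_sum_increment_midpoint_covariance_power_bound_general
    {Ω : Type*} [MeasurableSpace Ω] (μ : Measure Ω)
    (H : ℝ) (hH0 : 0 < H) (hH1 : H < 1/2) (t : ℝ) (ht : 0 < t)
    (B : ℝ → Ω → ℝ)
    (hint : ∀ s u : ℝ, Integrable (fun ω => B s ω * B u ω) μ)
    (hcov : ∀ s u : ℝ, 0 ≤ s → 0 ≤ u →
      ∫ ω, B s ω * B u ω ∂μ = (s ^ (2*H) + u ^ (2*H) - |u - s| ^ (2*H)) / 2)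
    (r : ℕ) (hr : 1 ≤ r) :
    ∃ C : ℝ, 0 < C ∧ ∀ n : ℕ, 2 ≤ n →
      ∑ j ∈ Finset.range ⌊(n:ℝ)*t⌋₊,
        |∫ ω, (B (((j:ℝ)+1)/n) ω - B ((j:ℝ)/n) ω)
            * ((B ((j:ℝ)/n) ω + B (((j:ℝ)+1)/n) ω) / 2) ∂μ| ^ r
        ≤ C * (n : ℝ) ^ (-(2*((r:ℝ)-1)*H)) := by
  obtain ⟨k, rfl⟩ : ∃ k, r = k + 1 := ⟨r - 1, by omega⟩
  refine ⟨t ^ (2*H), by positivity, fun n hn => ?_⟩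
  have hn0 : 0 < n := by omega
  set g : ℕ → ℝ := fun j => ((j : ℝ) / n) ^ (2*H) / 2
  have hg : Monotone g := (monotone_natCast_div_rpow (by positivity) n).div_const two_pos.le
  have hsummand : ∀ j : ℕ, ∫ ω, (B (((j:ℝ)+1)/n) ω - B ((j:ℝ)/n) ω)
      * ((B ((j:ℝ)/n) ω + B (((j:ℝ)+1)/n) ω) / 2) ∂μ = g (j+1) - g j := by
    intro j
    rw [integral_increment_mul_midpoint_eq hH0.ne' hint hcov (by positivity) (by positivity)]
    simp only [g, Nat.cast_succ]
    ring
  have hstep : ∀ j, g (j+1) - g j ≤ (n : ℝ) ^ (-(2*H)) := by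
    intro j
    have := natCast_succ_div_rpow_sub_le (by positivity) (by linarith) hn0 j (p := 2*H)
    have := Real.rpow_nonneg (Nat.cast_nonneg n) (-(2*H))
    simp only [g, Nat.cast_succ]
    linarith
  have hend : g ⌊(n:ℝ)*t⌋₊ - g 0 ≤ t ^ (2*H) := by
    have := Real.rpow_le_rpow (by positivity) (natFloor_mul_div_le hn0 ht.le)
      (by positivity : 0 ≤ 2*H)
    have := Real.rpow_nonneg ht.le (2*H)
    simp only [g, Nat.cast_zero, zero_div, Real.zero_rpow (by positivity : 2*H ≠ 0)]
    linarith
  have hexp : ((n : ℝ) ^ (-(2*H))) ^ k = (n : ℝ) ^ (-(2*(((k+1 : ℕ) : ℝ)-1)*H)) := by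
    rw [← Real.rpow_natCast, ← Real.rpow_mul (Nat.cast_nonneg n)]
    push_cast
    ring_nf
  calc _ = ∑ j ∈ range ⌊(n:ℝ)*t⌋₊, (g (j+1) - g j) ^ (k+1) := sum_congr rfl fun j _ => by
        rw [hsummand, abs_of_nonneg (sub_nonneg.mpr (hg j.le_succ))]
    _ ≤ ((n : ℝ) ^ (-(2*H))) ^ k * (g ⌊(n:ℝ)*t⌋₊ - g 0) :=
        sum_pow_succ_sub_le_mul_sub hg hstep k _
    _ ≤ t ^ (2*H) * (n : ℝ) ^ (-(2*(((k+1 : ℕ) : ℝ)-1)*H)) := by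
        rw [← hexp, mul_comm (t ^ _)]
        exact mul_le_mul_of_nonneg_left hend (by positivity)

/-- Lemma 2.6(b): for fBm with `H < 1/2` and `0 < t ≤ T`, for each `r ≥ 1` there
is `C` such that for all `n ≥ 2`,
`∑_{j=0}^{⌊nt⌋-1} |E[ΔB_{j/n} (B_{j/n}+B_{(j+1)/n})/2]|^r ≤ C n^{-2(r-1)H}`. -/
theorem fbm_sum_increment_midpoint_covariance_power_bound
    {Ω : Type*} [MeasurableSpace Ω] (μ : Measure Ω) [IsProbabilityMeasure μ]
    (H : ℝ) (hH0 : 0 < H) (hH1 : H < 1/2) (T t : ℝ) (ht : 0 < t) (htT : t ≤ T)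
    (B : ℝ → Ω → ℝ)
    (hint : ∀ s u : ℝ, Integrable (fun ω => B s ω * B u ω) μ)
    (hcov : ∀ s u : ℝ, 0 ≤ s → 0 ≤ u →
      ∫ ω, B s ω * B u ω ∂μ = (s ^ (2*H) + u ^ (2*H) - |u - s| ^ (2*H)) / 2)
    (r : ℕ) (hr : 1 ≤ r) :
    ∃ C : ℝ, 0 < C ∧ ∀ n : ℕ, 2 ≤ n →
      ∑ j ∈ Finset.range ⌊(n:ℝ)*t⌋₊,
        |∫ ω, (B (((j:ℝ)+1)/n) ω - B ((j:ℝ)/n) ω)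
            * ((B ((j:ℝ)/n) ω + B (((j:ℝ)+1)/n) ω) / 2) ∂μ| ^ r
        ≤ C * (n : ℝ) ^ (-(2*((r:ℝ)-1)*H)) :=
  fbm_sum_increment_midpoint_covariance_power_bound_general μ H hH0 hH1 t ht B hint hcov r hr
end

section
/- Let H < 1/2 and 0 < t ≤ T. For every integer r ≥ 1 there is a constant C such that for all n ≥ 2 and all integers 0 ≤ k ≤ ⌊nt⌋, the sum over j = 0 to ⌊nt⌋ - 1 of |E[ΔB_{j/n} ΔB_{k/n}]|^r is at most C n^{-2rH}. Consequently the double sum over 0 ≤ j,k ≤ ⌊nt⌋ - 1 of |E[ΔB_{j/n} ΔB_{k/n}]|^r is at most C ⌊nt⌋ n^{-2rH}. -/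
/-!
Write `ρ(x) = (|x+1|^{2H} + |x-1|^{2H} - 2|x|^{2H}) / 2`, so that
`E[ΔB_{j/n} ΔB_{k/n}] = ρ(k - j) n^{-2H}` and `|ρ| ≤ 1`. For `H ≤ 1/2` concavity of `x ↦ x^{2H}`
makes `ρ(m) ≤ 0` at every nonzero integer `m`, so `∑_j |ρ(k - j)|` is bounded by `2ρ(0)` minus the
signed sum `∑_j ρ(k - j)`; the latter telescopes and is bounded by `1` uniformly in the number of
terms. Hence each row sum is at most `3 n^{-2rH}`, and summing over the rows gives the double sum.
-/

open MeasureTheory Finset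

namespace Real

lemma abs_rpow_sub_abs_rpow_le {p : ℝ} (hp0 : 0 ≤ p) (hp1 : p ≤ 1) (a b : ℝ) :
    |a| ^ p - |b| ^ p ≤ |a - b| ^ p := by
  have hab : |a| ≤ |b| + |a - b| := by linarith [abs_sub_abs_le_abs_sub a b]
  have := calc
    |a| ^ p ≤ (|b| + |a - b|) ^ p := rpow_le_rpow (abs_nonneg a) hab hp0
    _ ≤ |b| ^ p + |a - b| ^ p := rpow_add_le_add_rpow (abs_nonneg _) (abs_nonneg _) hp0 hp1
  linarith

lemma abs_abs_rpow_sub_abs_rpow_le {p : ℝ} (hp0 : 0 ≤ p) (hp1 : p ≤ 1) (a b : ℝ) :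
    |(|a| ^ p - |b| ^ p)| ≤ |a - b| ^ p :=
  abs_sub_le_iff.2 ⟨abs_rpow_sub_abs_rpow_le hp0 hp1 a b,
    abs_sub_comm a b ▸ abs_rpow_sub_abs_rpow_le hp0 hp1 b a⟩

end Real

/-- The covariance at lag `x` of the unit increments of a fractional Brownian motion with
Hurst parameter `H = p / 2`. -/
noncomputable def incrementCov (p x : ℝ) : ℝ :=
  (|x + 1| ^ p + |x - 1| ^ p - 2 * |x| ^ p) / 2

section incrementCov

variable {p : ℝ}

lemma incrementCov_zero (hp : 0 < p) : incrementCov p 0 = 1 := by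
  simp [incrementCov, Real.zero_rpow hp.ne']

lemma incrementCov_neg (x : ℝ) : incrementCov p (-x) = incrementCov p x := by
  rw [incrementCov, show -x + 1 = -(x - 1) by ring, show -x - 1 = -(x + 1) by ring,
    abs_neg, abs_neg, abs_neg, incrementCov]
  ring

lemma incrementCov_abs (x : ℝ) : incrementCov p |x| = incrementCov p x := by
  rcases abs_choice x with h | h <;> rw [h]
  exact incrementCov_neg x

lemma incrementCov_eq_sub (x : ℝ) :
    incrementCov p x = ((|x + 1| ^ p - |x| ^ p) - (|x - 1 + 1| ^ p - |x - 1| ^ p)) / 2 := by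
  rw [incrementCov, sub_add_cancel]
  ring

lemma abs_incrementCov_le_one (hp0 : 0 ≤ p) (hp1 : p ≤ 1) (x : ℝ) : |incrementCov p x| ≤ 1 := by
  have h₁ := Real.abs_abs_rpow_sub_abs_rpow_le hp0 hp1 (x + 1) x
  have h₂ := Real.abs_abs_rpow_sub_abs_rpow_le hp0 hp1 (x - 1) x
  simp only [add_sub_cancel_left, sub_sub_cancel_left, abs_neg, abs_one, Real.one_rpow] at h₁ h₂
  rw [incrementCov, abs_div, abs_two, div_le_one two_pos,
    show |x + 1| ^ p + |x - 1| ^ p - 2 * |x| ^ p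
      = (|x + 1| ^ p - |x| ^ p) + (|x - 1| ^ p - |x| ^ p) by ring]
  linarith [abs_add_le (|x + 1| ^ p - |x| ^ p) (|x - 1| ^ p - |x| ^ p)]

lemma incrementCov_nonpos (hp0 : 0 ≤ p) (hp1 : p ≤ 1) {x : ℝ} (hx : 1 ≤ |x|) :
    incrementCov p x ≤ 0 := by
  rw [← incrementCov_abs]
  set y := |x|
  have hmid := (Real.concaveOn_rpow hp0 hp1).2 (Set.mem_Ici.2 (by linarith : (0 : ℝ) ≤ y - 1))
    (Set.mem_Ici.2 (by linarith : (0 : ℝ) ≤ y + 1)) (by norm_num : (0 : ℝ) ≤ 1 / 2)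
    (by norm_num : (0 : ℝ) ≤ 1 / 2) (by norm_num)
  simp only [smul_eq_mul, show (1 / 2 : ℝ) * (y - 1) + 1 / 2 * (y + 1) = y by ring] at hmid
  rw [incrementCov, abs_of_nonneg (by linarith : (0 : ℝ) ≤ y + 1),
    abs_of_nonneg (by linarith : (0 : ℝ) ≤ y - 1), abs_of_nonneg (by linarith : (0 : ℝ) ≤ y)]
  linarith

lemma abs_sum_incrementCov_sub_le_one (hp0 : 0 ≤ p) (hp1 : p ≤ 1) (x : ℝ) (N : ℕ) :
    |∑ j ∈ range N, incrementCov p (x - j)| ≤ 1 := by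
  set g : ℕ → ℝ := fun j => |x - j + 1| ^ p - |x - j| ^ p
  have htel : ∑ j ∈ range N, incrementCov p (x - j) = (g 0 - g N) / 2 := by
    rw [← sum_range_sub' g N, sum_div]
    refine sum_congr rfl fun j _ => ?_
    rw [incrementCov_eq_sub]
    simp only [g]
    push_cast
    ring_nf
  have hg : ∀ j, |g j| ≤ 1 := fun j => by
    simpa using Real.abs_abs_rpow_sub_abs_rpow_le hp0 hp1 (x - j + 1) (x - j)
  rw [htel, abs_div, abs_two, div_le_one two_pos]
  linarith [abs_sub (g 0) (g N), hg 0, hg N]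

lemma sum_abs_incrementCov_le_three (hp0 : 0 < p) (hp1 : p ≤ 1) (k N : ℕ) :
    ∑ j ∈ range N, |incrementCov p ((k : ℝ) - j)| ≤ 3 := by
  have hpoint : ∀ j ∈ range N,
      |incrementCov p ((k : ℝ) - j)| ≤ -incrementCov p ((k : ℝ) - j) + if j = k then 2 else 0 := by
    intro j _
    by_cases hjk : j = k
    · norm_num [hjk, incrementCov_zero hp0]
    · have hlag : 1 ≤ |(k : ℝ) - j| := by
        have := Int.one_le_abs (sub_ne_zero.2 (Int.natCast_inj.not.2 (Ne.symm hjk)))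
        exact_mod_cast this
      rw [abs_of_nonpos (incrementCov_nonpos hp0.le hp1 hlag), if_neg hjk]
      linarith
  have hdiag : ∑ j ∈ range N, (if j = k then (2 : ℝ) else 0) ≤ 2 := by
    rw [sum_ite_eq']
    split_ifs <;> norm_num
  have hsigned := neg_le_of_abs_le (abs_sum_incrementCov_sub_le_one hp0.le hp1 k N)
  calc ∑ j ∈ range N, |incrementCov p ((k : ℝ) - j)|
      ≤ ∑ j ∈ range N, (-incrementCov p ((k : ℝ) - j) + if j = k then 2 else 0) :=
        sum_le_sum hpoint
    _ ≤ 3 := by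
        rw [sum_add_distrib, sum_neg_distrib]
        linarith

lemma sum_abs_incrementCov_pow_le_three (hp0 : 0 < p) (hp1 : p ≤ 1) (k N : ℕ) {r : ℕ}
    (hr : r ≠ 0) : ∑ j ∈ range N, |incrementCov p ((k : ℝ) - j)| ^ r ≤ 3 :=
  (sum_le_sum fun _ _ => pow_le_of_le_one (abs_nonneg _)
    (abs_incrementCov_le_one hp0.le hp1 _) hr).trans (sum_abs_incrementCov_le_three hp0 hp1 k N)

end incrementCov

lemma integral_sub_mul_sub {Ω : Type*} [MeasurableSpace Ω] {μ : Measure Ω} {f g f' g' : Ω → ℝ}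
    (hff' : Integrable (fun ω => f ω * f' ω) μ) (hfg' : Integrable (fun ω => f ω * g' ω) μ)
    (hgf' : Integrable (fun ω => g ω * f' ω) μ) (hgg' : Integrable (fun ω => g ω * g' ω) μ) :
    ∫ ω, (f ω - g ω) * (f' ω - g' ω) ∂μ
      = ∫ ω, f ω * f' ω ∂μ - ∫ ω, f ω * g' ω ∂μ - ∫ ω, g ω * f' ω ∂μ + ∫ ω, g ω * g' ω ∂μ := by
  have hexp : (fun ω => (f ω - g ω) * (f' ω - g' ω))
      = fun ω => (f ω * f' ω - f ω * g' ω) - (g ω * f' ω - g ω * g' ω) := by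
    funext ω; ring
  rw [hexp, integral_sub, integral_sub hff' hfg', integral_sub hgf' hgg']
  · ring
  exacts [hff'.sub hfg', hgf'.sub hgg']

section increments

variable {Ω : Type*} [MeasurableSpace Ω] {μ : Measure Ω} {H : ℝ} {B : ℝ → Ω → ℝ}

lemma integral_increment_mul_increment
    (hint : ∀ s u : ℝ, Integrable (fun ω => B s ω * B u ω) μ)
    (hcov : ∀ s u : ℝ, 0 ≤ s → 0 ≤ u →
      ∫ ω, B s ω * B u ω ∂μ = (s ^ (2*H) + u ^ (2*H) - |u - s| ^ (2*H)) / 2)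
    {s u h : ℝ} (hs : 0 ≤ s) (hu : 0 ≤ u) (hh : 0 < h) :
    ∫ ω, (B (s + h) ω - B s ω) * (B (u + h) ω - B u ω) ∂μ
      = incrementCov (2 * H) ((u - s) / h) * h ^ (2 * H) := by
  rw [integral_sub_mul_sub (hint _ _) (hint _ _) (hint _ _) (hint _ _),
    hcov _ _ (by linarith) (by linarith), hcov _ _ (by linarith) hu, hcov _ _ hs (by linarith),
    hcov _ _ hs hu, incrementCov, div_add_one hh.ne', div_sub_one hh.ne', abs_div, abs_div,
    abs_div, abs_of_pos hh, Real.div_rpow (abs_nonneg _) hh.le, Real.div_rpow (abs_nonneg _) hh.le,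
    Real.div_rpow (abs_nonneg _) hh.le, show u + h - (s + h) = u - s by ring,
    show u - (s + h) = u - s - h by ring, show u + h - s = u - s + h by ring]
  field_simp
  ring

lemma integral_gridIncrement_mul_gridIncrement
    (hint : ∀ s u : ℝ, Integrable (fun ω => B s ω * B u ω) μ)
    (hcov : ∀ s u : ℝ, 0 ≤ s → 0 ≤ u →
      ∫ ω, B s ω * B u ω ∂μ = (s ^ (2*H) + u ^ (2*H) - |u - s| ^ (2*H)) / 2)
    {n : ℕ} (hn : 0 < n) (j k : ℕ) :
    ∫ ω, (B (((j : ℝ) + 1) / n) ω - B ((j : ℝ) / n) ω)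
        * (B (((k : ℝ) + 1) / n) ω - B ((k : ℝ) / n) ω) ∂μ
      = incrementCov (2 * H) ((k : ℝ) - j) * (n : ℝ) ^ (-(2 * H)) := by
  have hn' : (0 : ℝ) < n := Nat.cast_pos.2 hn
  have hlag : ((k : ℝ) / n - (j : ℝ) / n) / (1 / n) = (k : ℝ) - j := by
    field_simp
  simp only [add_div]
  rw [integral_increment_mul_increment hint hcov (by positivity) (by positivity)
    (by positivity), hlag, one_div, Real.inv_rpow hn'.le, Real.rpow_neg hn'.le]

end increments

theorem fbm_sum_increment_increment_covariance_power_bound_general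
    {Ω : Type*} [MeasurableSpace Ω] (μ : Measure Ω)
    (H : ℝ) (hH0 : 0 < H) (hH1 : H < 1/2) (t : ℝ)
    (B : ℝ → Ω → ℝ)
    (hint : ∀ s u : ℝ, Integrable (fun ω => B s ω * B u ω) μ)
    (hcov : ∀ s u : ℝ, 0 ≤ s → 0 ≤ u →
      ∫ ω, B s ω * B u ω ∂μ = (s ^ (2*H) + u ^ (2*H) - |u - s| ^ (2*H)) / 2)
    (r : ℕ) (hr : 1 ≤ r) :
    ∃ C : ℝ, 0 < C ∧ ∀ n : ℕ, 2 ≤ n →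
      (∀ k : ℕ, k ≤ ⌊(n:ℝ)*t⌋₊ →
        ∑ j ∈ Finset.range ⌊(n:ℝ)*t⌋₊,
          |∫ ω, (B (((j:ℝ)+1)/n) ω - B ((j:ℝ)/n) ω)
              * (B (((k:ℝ)+1)/n) ω - B ((k:ℝ)/n) ω) ∂μ| ^ r
          ≤ C * (n : ℝ) ^ (-(2*(r:ℝ)*H))) ∧
      ∑ j ∈ Finset.range ⌊(n:ℝ)*t⌋₊, ∑ k ∈ Finset.range ⌊(n:ℝ)*t⌋₊,
          |∫ ω, (B (((j:ℝ)+1)/n) ω - B ((j:ℝ)/n) ω)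
              * (B (((k:ℝ)+1)/n) ω - B ((k:ℝ)/n) ω) ∂μ| ^ r
        ≤ C * (⌊(n:ℝ)*t⌋₊ : ℝ) * (n : ℝ) ^ (-(2*(r:ℝ)*H)) := by
  have hp0 : 0 < 2 * H := by linarith
  have hp1 : 2 * H ≤ 1 := by linarith
  refine ⟨3, three_pos, fun n hn => ?_⟩
  have hn' : (0 : ℝ) < n := by positivity
  set N := ⌊(n : ℝ) * t⌋₊
  have hrow : ∀ k : ℕ, ∑ j ∈ range N,
      |∫ ω, (B (((j:ℝ)+1)/n) ω - B ((j:ℝ)/n) ω) * (B (((k:ℝ)+1)/n) ω - B ((k:ℝ)/n) ω) ∂μ| ^ r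
        ≤ 3 * (n : ℝ) ^ (-(2 * (r : ℝ) * H)) := by
    intro k
    have hscale : ((n : ℝ) ^ (-(2 * H))) ^ r = (n : ℝ) ^ (-(2 * (r : ℝ) * H)) := by
      rw [← Real.rpow_natCast, ← Real.rpow_mul hn'.le]
      ring_nf
    simp_rw [integral_gridIncrement_mul_gridIncrement hint hcov (by omega : 0 < n), abs_mul,
      mul_pow, abs_of_pos (Real.rpow_pos_of_pos hn' _), hscale, ← sum_mul]
    exact mul_le_mul_of_nonneg_right
      (sum_abs_incrementCov_pow_le_three hp0 hp1 k N (by omega)) (by positivity)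
  refine ⟨fun k _ => hrow k, ?_⟩
  rw [sum_comm]
  calc _ ≤ ∑ _k ∈ range N, 3 * (n : ℝ) ^ (-(2 * (r : ℝ) * H)) := sum_le_sum fun k _ => hrow k
    _ = _ := by rw [sum_const, card_range, nsmul_eq_mul]; ring

/-- Lemma 2.6(c): for fBm with `H < 1/2` and `0 < t ≤ T`, for each `r ≥ 1` there
is `C` such that for all `n ≥ 2` and all `0 ≤ k ≤ ⌊nt⌋`,
`∑_{j=0}^{⌊nt⌋-1} |E[ΔB_{j/n} ΔB_{k/n}]|^r ≤ C n^{-2rH}`, and consequently the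
double sum is at most `C ⌊nt⌋ n^{-2rH}`. -/
theorem fbm_sum_increment_increment_covariance_power_bound
    {Ω : Type*} [MeasurableSpace Ω] (μ : Measure Ω) [IsProbabilityMeasure μ]
    (H : ℝ) (hH0 : 0 < H) (hH1 : H < 1/2) (T t : ℝ) (ht : 0 < t) (htT : t ≤ T)
    (B : ℝ → Ω → ℝ)
    (hint : ∀ s u : ℝ, Integrable (fun ω => B s ω * B u ω) μ)
    (hcov : ∀ s u : ℝ, 0 ≤ s → 0 ≤ u →
      ∫ ω, B s ω * B u ω ∂μ = (s ^ (2*H) + u ^ (2*H) - |u - s| ^ (2*H)) / 2)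
    (r : ℕ) (hr : 1 ≤ r) :
    ∃ C : ℝ, 0 < C ∧ ∀ n : ℕ, 2 ≤ n →
      (∀ k : ℕ, k ≤ ⌊(n:ℝ)*t⌋₊ →
        ∑ j ∈ Finset.range ⌊(n:ℝ)*t⌋₊,
          |∫ ω, (B (((j:ℝ)+1)/n) ω - B ((j:ℝ)/n) ω)
              * (B (((k:ℝ)+1)/n) ω - B ((k:ℝ)/n) ω) ∂μ| ^ r
          ≤ C * (n : ℝ) ^ (-(2*(r:ℝ)*H))) ∧
      ∑ j ∈ Finset.range ⌊(n:ℝ)*t⌋₊, ∑ k ∈ Finset.range ⌊(n:ℝ)*t⌋₊,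
          |∫ ω, (B (((j:ℝ)+1)/n) ω - B ((j:ℝ)/n) ω)
              * (B (((k:ℝ)+1)/n) ω - B ((k:ℝ)/n) ω) ∂μ| ^ r
        ≤ C * (⌊(n:ℝ)*t⌋₊ : ℝ) * (n : ℝ) ^ (-(2*(r:ℝ)*H)) :=
  fbm_sum_increment_increment_covariance_power_bound_general μ H hH0 hH1 t B hint hcov r hr
end

section
/- For a smooth function g : ℝ → ℝ and real numbers x, h, the Simpson's rule identity holds: g(x+h) - g(x-h) = (h/3)(g'(x-h) + 4g'(x) + g'(x+h)) + (1/6)∫_0^h (g⁗(x-u) - g⁗(x+u)) · u(h-u)² du. -/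
/-!
Put `R k u = g⁽ᵏ⁾(x+u) - (-1)ᵏ g⁽ᵏ⁾(x-u)`, so that `∂ᵤ R k = R (k+1)`, and let `p 3 = u(h-u)²/6`
with `p 2 = p 3'`, `p 1 = p 2'`, `p 0 = p 1' = 1`. By the product rule the alternating sum
`∑_{k ≤ 3} (-1)ᵏ R k · p k` has derivative `-R 4 · p 3` (the intermediate terms telescope), which
is the remainder integrand `(g⁗(x-u) - g⁗(x+u)) u(h-u)²/6`. Hence the remainder is this sum taken
between `0` and `h`, and the values of the kernels `p k` at the endpoints produce exactly
`g(x+h) - g(x-h)` minus the Simpson weights `h/3, 4h/3, h/3`.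
-/

open Finset

theorem ContDiff.hasDerivAt_iteratedDeriv {𝕜 F : Type*} [NontriviallyNormedField 𝕜]
    [NormedAddCommGroup F] [NormedSpace 𝕜 F] {f : 𝕜 → F} {n : WithTop ℕ∞} (hf : ContDiff 𝕜 n f)
    {k : ℕ} (hk : k < n) (y : 𝕜) :
    HasDerivAt (iteratedDeriv k f) (iteratedDeriv (k + 1) f y) y := by
  rw [iteratedDeriv_succ]
  exact (hf.differentiable_iteratedDeriv k hk y).hasDerivAt

theorem hasDerivAt_apply_add_sub_mul_apply_sub {𝕜 : Type*} [NontriviallyNormedField 𝕜]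
    {f : 𝕜 → 𝕜} {a b x u : 𝕜} (c : 𝕜) (hp : HasDerivAt f a (x + u))
    (hm : HasDerivAt f b (x - u)) :
    HasDerivAt (fun u => f (x + u) - c * f (x - u)) (a + c * b) u := by
  have hp' := hp.comp u ((hasDerivAt_id u).const_add x)
  have hm' := hm.comp u ((hasDerivAt_id u).const_sub x)
  have := hp'.sub (hm'.const_mul c)
  simp only [Function.comp_def] at this
  exact this.congr_deriv (by ring)

theorem hasDerivAt_sum_neg_one_pow_mul {𝕜 : Type*} [NontriviallyNormedField 𝕜]
    {R p : ℕ → 𝕜 → 𝕜} {u : 𝕜} (n : ℕ) (hR : ∀ k ≤ n, HasDerivAt (R k) (R (k + 1) u) u)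
    (hp₀ : HasDerivAt (p 0) 0 u) (hp : ∀ k < n, HasDerivAt (p (k + 1)) (p k u) u) :
    HasDerivAt (fun u => ∑ k ∈ range (n + 1), (-1) ^ k * R k u * p k u)
      ((-1) ^ n * R (n + 1) u * p n u) u := by
  induction n with
  | zero => simpa using (hR 0 le_rfl).fun_mul hp₀
  | succ n ih =>
    have hlast := ((hR (n + 1) le_rfl).fun_mul (hp n n.lt_succ_self)).const_mul ((-1 : 𝕜) ^ (n + 1))
    have hsum := (ih (fun k hk => hR k (by omega)) (fun k hk => hp k (by omega))).fun_add hlast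
    simp only [sum_range_succ _ (n + 1), mul_assoc] at hsum ⊢
    exact hsum.congr_deriv (by ring)

noncomputable def simpsonKernel (h : ℝ) : ℕ → ℝ → ℝ
  | 0 => fun _ => 1
  | 1 => fun u => u - 2 * h / 3
  | 2 => fun u => (h - u) * (h - 3 * u) / 6
  | 3 => fun u => u * (h - u) ^ 2 / 6
  | _ => fun _ => 0

theorem hasDerivAt_simpsonKernel_zero (h u : ℝ) : HasDerivAt (simpsonKernel h 0) 0 u :=
  hasDerivAt_const u 1

theorem hasDerivAt_simpsonKernel_succ (h u : ℝ) {k : ℕ} (hk : k < 3) :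
    HasDerivAt (simpsonKernel h (k + 1)) (simpsonKernel h k u) u := by
  interval_cases k
  · exact (hasDerivAt_id u).sub_const (2 * h / 3)
  · exact ((((hasDerivAt_id u).const_sub h).fun_mul
      (((hasDerivAt_id u).const_mul 3).const_sub h)).div_const 6).congr_deriv
      (by simp only [simpsonKernel, id]; ring)
  · exact (((hasDerivAt_id u).fun_mul (((hasDerivAt_id u).const_sub h).fun_pow 2)).div_const 6).congr_deriv
      (by simp only [simpsonKernel, id]; ring)

/-- Simpson's rule identity with integral remainder: for a `C⁴` function `g`,
`g(x+h) - g(x-h) = (h/3)(g'(x-h) + 4g'(x) + g'(x+h))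
  + (1/6)∫₀^h (g⁗(x-u) - g⁗(x+u)) u (h-u)² du`. -/
theorem simpson_rule_integral_remainder
    (g : ℝ → ℝ) (hg : ContDiff ℝ 4 g) (x h : ℝ) :
    g (x + h) - g (x - h)
      = h/3 * (deriv g (x - h) + 4 * deriv g x + deriv g (x + h))
        + (1/6) * ∫ u in (0:ℝ)..h,
            (iteratedDeriv 4 g (x - u) - iteratedDeriv 4 g (x + u)) * (u * (h - u)^2) := by
  let R (k : ℕ) (u : ℝ) : ℝ := iteratedDeriv k g (x + u) - (-1) ^ k * iteratedDeriv k g (x - u)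
  have hR (u : ℝ) (k : ℕ) (hk : k ≤ 3) : HasDerivAt (R k) (R (k + 1) u) u := by
    have hk' : (k : WithTop ℕ∞) < 4 := by exact_mod_cast Nat.lt_succ_of_le hk
    exact (hasDerivAt_apply_add_sub_mul_apply_sub ((-1) ^ k)
      (hg.hasDerivAt_iteratedDeriv hk' (x + u)) (hg.hasDerivAt_iteratedDeriv hk' (x - u))).congr_deriv
      (by simp only [R]; ring)
  have hG (u : ℝ) := hasDerivAt_sum_neg_one_pow_mul 3 (hR u)
    (hasDerivAt_simpsonKernel_zero h u) (fun k hk => hasDerivAt_simpsonKernel_succ h u hk)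
  have hremainder (u : ℝ) : (-1) ^ 3 * R (3 + 1) u * simpsonKernel h 3 u
      = 1 / 6 * ((iteratedDeriv 4 g (x - u) - iteratedDeriv 4 g (x + u)) * (u * (h - u) ^ 2)) := by
    simp only [R, simpsonKernel]; ring
  have hFTC := intervalIntegral.integral_eq_sub_of_hasDerivAt (a := 0) (b := h)
    (fun u _ => hG u) (by simp only [R, simpsonKernel]; apply Continuous.intervalIntegrable; fun_prop)
  rw [funext hremainder, intervalIntegral.integral_const_mul] at hFTC
  simp only [sum_range_succ, sum_range_zero, R, simpsonKernel, iteratedDeriv_zero, iteratedDeriv_one,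
    add_zero, sub_zero] at hFTC
  linear_combination -hFTC
end

section
/- For a C^11 function g : ℝ → ℝ and reals x, h ≥ 0, one has the exact expansion: g(x+h) - g(x-h) = (h/3)(g'(x-h) + 4g'(x) + g'(x+h)) - g^{(5)}(x) h^5 / 90 - A_7 g^{(7)}(x) h^7 - A_9 g^{(9)}(x) h^9 - (1/(6·7!)) ∫_0^h (g^{(11)}(ξ(u)) + g^{(11)}(η(u))) u^8 (h-u)^2 du, where A_7 and A_9 are the explicit positive constants A_7 = (1/(3·3!))·∫_0^h u^4(h-u)^2 du / h^7 and A_9 = (1/(3·5!))·∫_0^h u^6(h-u)^2 du / h^9, and for each u ∈ [0,h], ξ(u), η(u) ∈ [x-h, x+h]. -/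
open intervalIntegral MeasureTheory Set

private lemma integral_pow_mul_sq (h : ℝ) (m : ℕ) :
    ∫ u in (0:ℝ)..h, u ^ m * (h - u) ^ 2
      = h ^ (m + 3) * (1 / (m + 1) - 2 / (m + 2) + 1 / (m + 3)) := by
  have e : Set.EqOn (fun u : ℝ => u ^ m * (h - u) ^ 2)
      (fun u : ℝ => h ^ 2 * u ^ m - 2 * h * u ^ (m + 1) + u ^ (m + 2))
      (Set.uIcc (0:ℝ) h) := fun u _ => by ring
  rw [intervalIntegral.integral_congr e]
  have i1 : IntervalIntegrable (fun u : ℝ => h ^ 2 * u ^ m) MeasureTheory.volume 0 h :=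
    (Continuous.intervalIntegrable (by continuity) _ _)
  have i2 : IntervalIntegrable (fun u : ℝ => 2 * h * u ^ (m + 1)) MeasureTheory.volume 0 h :=
    (Continuous.intervalIntegrable (by continuity) _ _)
  have i3 : IntervalIntegrable (fun u : ℝ => u ^ (m + 2)) MeasureTheory.volume 0 h :=
    (Continuous.intervalIntegrable (by continuity) _ _)
  rw [intervalIntegral.integral_add (i1.sub i2) i3, intervalIntegral.integral_sub i1 i2,
    intervalIntegral.integral_const_mul, intervalIntegral.integral_const_mul,
    integral_pow, integral_pow, integral_pow]
  have h1 : ((m:ℝ) + 1) ≠ 0 := by positivity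
  have h2 : ((m:ℝ) + 2) ≠ 0 := by positivity
  have h3 : ((m:ℝ) + 3) ≠ 0 := by positivity
  push_cast
  field_simp
  ring

private lemma integral_sub_pow_six (w : ℝ) :
    ∫ t in (0:ℝ)..w, (w - t) ^ 6 = w ^ 7 / 7 := by
  have e := intervalIntegral.integral_comp_sub_left (a := (0:ℝ)) (b := w) (fun s => s ^ 6) w
  simp only [sub_self, sub_zero] at e
  rw [e, integral_pow]
  norm_num

private lemma phiA_hasDeriv (p₀ p₁ p₂ p₃ p₄ q₀ q₁ q₂ q₃ q₄ : ℝ → ℝ) (c h : ℝ)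
    (hp₀ : ∀ t, HasDerivAt p₀ (p₁ t) t) (hp₁ : ∀ t, HasDerivAt p₁ (p₂ t) t)
    (hp₂ : ∀ t, HasDerivAt p₂ (p₃ t) t) (hp₃ : ∀ t, HasDerivAt p₃ (p₄ t) t)
    (hq₀ : ∀ t, HasDerivAt q₀ (-q₁ t) t) (hq₁ : ∀ t, HasDerivAt q₁ (-q₂ t) t)
    (hq₂ : ∀ t, HasDerivAt q₂ (-q₃ t) t) (hq₃ : ∀ t, HasDerivAt q₃ (-q₄ t) t)
    (t : ℝ) :
    HasDerivAt (fun t =>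
      p₀ t - q₀ t - t / 3 * (q₁ t + 4 * c + p₁ t)
      + (h - t) * (2 / 3 * (p₁ t + q₁ t) - 4 / 3 * c - t / 3 * (p₂ t - q₂ t))
      + (h - t) ^ 2 / 2 * (1 / 3 * (p₂ t - q₂ t) - t / 3 * (p₃ t + q₃ t)))
      ((h - t) ^ 2 / 2 * (-(t / 3) * (p₄ t - q₄ t))) t := by
  have ht : HasDerivAt (fun t : ℝ => t) 1 t := hasDerivAt_id t
  have big :=
    ((((hp₀ t).sub (hq₀ t)).sub ((ht.div_const 3).mul
        (((hq₁ t).add (hasDerivAt_const t (4 * c))).add (hp₁ t)))).add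
      ((ht.const_sub h).mul
        (((((hp₁ t).add (hq₁ t)).const_mul (2 / 3)).sub (hasDerivAt_const t (4 / 3 * c))).sub
          ((ht.div_const 3).mul ((hp₂ t).sub (hq₂ t)))))).add
      ((((ht.const_sub h).pow 2).div_const 2).mul
        ((((hp₂ t).sub (hq₂ t)).const_mul (1 / 3)).sub
          ((ht.div_const 3).mul ((hp₃ t).add (hq₃ t)))))
  refine big.congr_deriv ?_
  simp only [Pi.add_apply, Pi.sub_apply, Pi.mul_apply, Pi.pow_apply, Pi.neg_apply]
  ring

private lemma phiB_hasDeriv (p₀ p₁ p₂ p₃ p₄ p₅ p₆ p₇ q₀ q₁ q₂ q₃ q₄ q₅ q₆ q₇ : ℝ → ℝ) (u : ℝ)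
    (hp₀ : ∀ t, HasDerivAt p₀ (p₁ t) t) (hp₁ : ∀ t, HasDerivAt p₁ (p₂ t) t)
    (hp₂ : ∀ t, HasDerivAt p₂ (p₃ t) t) (hp₃ : ∀ t, HasDerivAt p₃ (p₄ t) t)
    (hp₄ : ∀ t, HasDerivAt p₄ (p₅ t) t) (hp₅ : ∀ t, HasDerivAt p₅ (p₆ t) t)
    (hp₆ : ∀ t, HasDerivAt p₆ (p₇ t) t)
    (hq₀ : ∀ t, HasDerivAt q₀ (-q₁ t) t) (hq₁ : ∀ t, HasDerivAt q₁ (-q₂ t) t)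
    (hq₂ : ∀ t, HasDerivAt q₂ (-q₃ t) t) (hq₃ : ∀ t, HasDerivAt q₃ (-q₄ t) t)
    (hq₄ : ∀ t, HasDerivAt q₄ (-q₅ t) t) (hq₅ : ∀ t, HasDerivAt q₅ (-q₆ t) t)
    (hq₆ : ∀ t, HasDerivAt q₆ (-q₇ t) t)
    (t : ℝ) :
    HasDerivAt (fun t =>
      (q₀ t - p₀ t) + (u - t) * (-q₁ t - p₁ t) + (u - t) ^ 2 / 2 * (q₂ t - p₂ t)
      + (u - t) ^ 3 / 6 * (-q₃ t - p₃ t) + (u - t) ^ 4 / 24 * (q₄ t - p₄ t)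
      + (u - t) ^ 5 / 120 * (-q₅ t - p₅ t) + (u - t) ^ 6 / 720 * (q₆ t - p₆ t))
      ((u - t) ^ 6 / 720 * (-q₇ t - p₇ t)) t := by
  have ht : HasDerivAt (fun t : ℝ => t) 1 t := hasDerivAt_id t
  have b0 := (hq₀ t).sub (hp₀ t)
  have b1 := (ht.const_sub u).mul (((hq₁ t).neg).sub (hp₁ t))
  have b2 := (((ht.const_sub u).pow 2).div_const 2).mul ((hq₂ t).sub (hp₂ t))
  have b3 := (((ht.const_sub u).pow 3).div_const 6).mul (((hq₃ t).neg).sub (hp₃ t))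
  have b4 := (((ht.const_sub u).pow 4).div_const 24).mul ((hq₄ t).sub (hp₄ t))
  have b5 := (((ht.const_sub u).pow 5).div_const 120).mul (((hq₅ t).neg).sub (hp₅ t))
  have b6 := (((ht.const_sub u).pow 6).div_const 720).mul ((hq₆ t).sub (hp₆ t))
  have big := (((((b0.add b1).add b2).add b3).add b4).add b5).add b6
  refine big.congr_deriv ?_
  simp only [Pi.add_apply, Pi.sub_apply, Pi.mul_apply, Pi.pow_apply, Pi.neg_apply]
  ring

/-- Exact Simpson expansion of order 11: for a `C¹¹` function `g` and `h ≥ 0`,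
`g(x+h) - g(x-h) = (h/3)(g'(x-h)+4g'(x)+g'(x+h)) - g⁽⁵⁾(x)h⁵/90
  - A₇ g⁽⁷⁾(x) h⁷ - A₉ g⁽⁹⁾(x) h⁹
  - (1/(6·7!)) ∫₀^h (g⁽¹¹⁾(ξ(u)) + g⁽¹¹⁾(η(u))) u⁸ (h-u)² du`,
where `A₇ = (1/(3·3!))∫₀¹ v⁴(1-v)² dv`, `A₉ = (1/(3·5!))∫₀¹ v⁶(1-v)² dv`
(equivalently `(1/(3·3!))∫₀^h u⁴(h-u)² du / h⁷` etc.), and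
`ξ(u), η(u) ∈ [x-h, x+h]` for every `u ∈ [0,h]`. -/
theorem simpson_rule_order_eleven_expansion
    (g : ℝ → ℝ) (hg : ContDiff ℝ 11 g) (x h : ℝ) (hh : 0 ≤ h) :
    ∃ ξ η : ℝ → ℝ,
      (∀ u ∈ Set.Icc (0:ℝ) h,
        ξ u ∈ Set.Icc (x - h) (x + h) ∧ η u ∈ Set.Icc (x - h) (x + h)) ∧
      g (x + h) - g (x - h)
        = h/3 * (deriv g (x - h) + 4 * deriv g x + deriv g (x + h))
          - iteratedDeriv 5 g x * h^5 / 90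
          - ((1/(3 * (Nat.factorial 3 : ℝ))) * ∫ v in (0:ℝ)..1, v^4 * (1 - v)^2)
              * iteratedDeriv 7 g x * h^7
          - ((1/(3 * (Nat.factorial 5 : ℝ))) * ∫ v in (0:ℝ)..1, v^6 * (1 - v)^2)
              * iteratedDeriv 9 g x * h^9
          - (1/(6 * (Nat.factorial 7 : ℝ)))
              * ∫ u in (0:ℝ)..h,
                  (iteratedDeriv 11 g (ξ u) + iteratedDeriv 11 g (η u))
                    * (u^8 * (h - u)^2) := by
  rcases eq_or_lt_of_le hh with hz | hpos
  · -- degenerate case h = 0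
    refine ⟨fun _ => x, fun _ => x, ?_, ?_⟩
    · intro u _
      constructor <;> (constructor <;> linarith)
    · rw [← hz]
      norm_num [intervalIntegral.integral_same]
  -- main case 0 < h
  have hD : ∀ k : ℕ, k < 11 → ∀ y : ℝ,
      HasDerivAt (iteratedDeriv k g) (iteratedDeriv (k+1) g y) y := by
    intro k hk y
    have hd : DifferentiableAt ℝ (iteratedDeriv k g) y :=
      (hg.differentiable_iteratedDeriv k (by exact_mod_cast hk)).differentiableAt
    have := hd.hasDerivAt
    rwa [← iteratedDeriv_succ] at this
  have hDp : ∀ k : ℕ, k < 11 → ∀ t : ℝ,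
      HasDerivAt (fun t => iteratedDeriv k g (x + t)) (iteratedDeriv (k+1) g (x + t)) t :=
    fun k hk t => by simpa [Function.comp_def] using ((hD k hk (x+t)).comp t ((hasDerivAt_id t).const_add x))
  have hDm : ∀ k : ℕ, k < 11 → ∀ t : ℝ,
      HasDerivAt (fun t => iteratedDeriv k g (x - t)) (-iteratedDeriv (k+1) g (x - t)) t :=
    fun k hk t => by simpa [Function.comp_def] using ((hD k hk (x-t)).comp t ((hasDerivAt_id t).const_sub x))
  have hDc : ∀ k : ℕ, k ≤ 11 → Continuous (iteratedDeriv k g) :=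
    fun k hk => hg.continuous_iteratedDeriv k (by exact_mod_cast hk)
  have c4 : Continuous (iteratedDeriv 4 g) := hDc 4 (by norm_num)
  have c11 : Continuous (iteratedDeriv 11 g) := hDc 11 le_rfl
  -- Part A : Simpson kernel identity
  have hA : ∀ t : ℝ, HasDerivAt (fun t =>
      iteratedDeriv 0 g (x + t) - iteratedDeriv 0 g (x - t)
        - t / 3 * (iteratedDeriv 1 g (x - t) + 4 * iteratedDeriv 1 g x + iteratedDeriv 1 g (x + t))
      + (h - t) * (2 / 3 * (iteratedDeriv 1 g (x + t) + iteratedDeriv 1 g (x - t))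
          - 4 / 3 * iteratedDeriv 1 g x
          - t / 3 * (iteratedDeriv 2 g (x + t) - iteratedDeriv 2 g (x - t)))
      + (h - t) ^ 2 / 2 * (1 / 3 * (iteratedDeriv 2 g (x + t) - iteratedDeriv 2 g (x - t))
          - t / 3 * (iteratedDeriv 3 g (x + t) + iteratedDeriv 3 g (x - t))))
      ((h - t) ^ 2 / 2 * (-(t / 3) * (iteratedDeriv 4 g (x + t) - iteratedDeriv 4 g (x - t)))) t :=
    fun t => phiA_hasDeriv _ _ _ _ _ _ _ _ _ _ (iteratedDeriv 1 g x) h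
      (hDp 0 (by norm_num)) (hDp 1 (by norm_num)) (hDp 2 (by norm_num)) (hDp 3 (by norm_num))
      (hDm 0 (by norm_num)) (hDm 1 (by norm_num)) (hDm 2 (by norm_num)) (hDm 3 (by norm_num)) t
  have partA : g (x + h) - g (x - h)
      = h/3 * (iteratedDeriv 1 g (x - h) + 4 * iteratedDeriv 1 g x + iteratedDeriv 1 g (x + h))
        + ∫ t in (0:ℝ)..h, (h - t) ^ 2 / 2
            * (-(t / 3) * (iteratedDeriv 4 g (x + t) - iteratedDeriv 4 g (x - t))) := by
    rw [intervalIntegral.integral_eq_sub_of_hasDerivAt (fun t _ => hA t)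
      (Continuous.intervalIntegrable (by fun_prop) 0 h)]
    simp only [add_zero, sub_zero, iteratedDeriv_zero]
    ring
  -- Part B : two-sided Taylor expansion of g⁗ with explicit remainder
  set R : ℝ → ℝ := fun u => iteratedDeriv 4 g (x + u) - iteratedDeriv 4 g (x - u)
      - 2 * iteratedDeriv 5 g x * u - iteratedDeriv 7 g x * u ^ 3 / 3
      - iteratedDeriv 9 g x * u ^ 5 / 60 with hRdef
  have cR : Continuous R := by rw [hRdef]; fun_prop
  have hRt : ∀ u : ℝ, R u
      = ∫ t in (0:ℝ)..u, (u - t) ^ 6 / 720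
          * (iteratedDeriv 11 g (x - t) + iteratedDeriv 11 g (x + t)) := by
    intro u
    have hΨ : ∀ t : ℝ, HasDerivAt (fun t =>
        (iteratedDeriv 4 g (x - t) - iteratedDeriv 4 g (x + t))
        + (u - t) * (-iteratedDeriv 5 g (x - t) - iteratedDeriv 5 g (x + t))
        + (u - t) ^ 2 / 2 * (iteratedDeriv 6 g (x - t) - iteratedDeriv 6 g (x + t))
        + (u - t) ^ 3 / 6 * (-iteratedDeriv 7 g (x - t) - iteratedDeriv 7 g (x + t))
        + (u - t) ^ 4 / 24 * (iteratedDeriv 8 g (x - t) - iteratedDeriv 8 g (x + t))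
        + (u - t) ^ 5 / 120 * (-iteratedDeriv 9 g (x - t) - iteratedDeriv 9 g (x + t))
        + (u - t) ^ 6 / 720 * (iteratedDeriv 10 g (x - t) - iteratedDeriv 10 g (x + t)))
        ((u - t) ^ 6 / 720 * (-iteratedDeriv 11 g (x - t) - iteratedDeriv 11 g (x + t))) t :=
      fun t => phiB_hasDeriv _ _ _ _ _ _ _ _ _ _ _ _ _ _ _ _ u
        (hDp 4 (by norm_num)) (hDp 5 (by norm_num)) (hDp 6 (by norm_num))
        (hDp 7 (by norm_num)) (hDp 8 (by norm_num)) (hDp 9 (by norm_num))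
        (hDp 10 (by norm_num))
        (hDm 4 (by norm_num)) (hDm 5 (by norm_num)) (hDm 6 (by norm_num))
        (hDm 7 (by norm_num)) (hDm 8 (by norm_num)) (hDm 9 (by norm_num))
        (hDm 10 (by norm_num)) t
    have key := intervalIntegral.integral_eq_sub_of_hasDerivAt (fun t _ => hΨ t)
      (Continuous.intervalIntegrable (by fun_prop) 0 u)
    have key2 : ∫ t in (0:ℝ)..u, (u - t) ^ 6 / 720
          * (iteratedDeriv 11 g (x - t) + iteratedDeriv 11 g (x + t))
        = -(∫ t in (0:ℝ)..u, (u - t) ^ 6 / 720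
          * (-iteratedDeriv 11 g (x - t) - iteratedDeriv 11 g (x + t))) := by
      rw [← intervalIntegral.integral_neg]
      exact intervalIntegral.integral_congr fun t _ => by ring
    rw [hRdef, key2, key]
    simp only [add_zero, sub_zero]
    ring
  -- extreme values of the 11-th derivative on [x-h, x+h]
  have hne : (Set.Icc (x - h) (x + h)).Nonempty := ⟨x, by constructor <;> linarith⟩
  obtain ⟨a, haI, hminon⟩ := isCompact_Icc.exists_isMinOn hne (c11.continuousOn)
  obtain ⟨b, hbI, hmaxon⟩ := isCompact_Icc.exists_isMaxOn hne (c11.continuousOn)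
  have hmin : ∀ y ∈ Set.Icc (x - h) (x + h), iteratedDeriv 11 g a ≤ iteratedDeriv 11 g y :=
    fun y hy => hminon hy
  have hmax : ∀ y ∈ Set.Icc (x - h) (x + h), iteratedDeriv 11 g y ≤ iteratedDeriv 11 g b :=
    fun y hy => hmaxon hy
  -- pointwise bounds on R
  have hRlo : ∀ u ∈ Set.Icc (0:ℝ) h, iteratedDeriv 11 g a * u ^ 7 / 2520 ≤ R u := by
    intro u hu
    rw [hRt u]
    have mono := intervalIntegral.integral_mono_on (f := fun t =>
        iteratedDeriv 11 g a / 360 * (u - t) ^ 6)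
      (g := fun t => (u - t) ^ 6 / 720 * (iteratedDeriv 11 g (x - t) + iteratedDeriv 11 g (x + t)))
      (μ := MeasureTheory.volume) hu.1
      (Continuous.intervalIntegrable (by fun_prop) 0 u)
      (Continuous.intervalIntegrable (by fun_prop) 0 u)
      (by
        intro t htm
        have h1 : iteratedDeriv 11 g a ≤ iteratedDeriv 11 g (x - t) :=
          hmin _ ⟨by linarith [hu.2, htm.2], by linarith [htm.1]⟩
        have h2 : iteratedDeriv 11 g a ≤ iteratedDeriv 11 g (x + t) :=
          hmin _ ⟨by linarith [htm.1], by linarith [hu.2, htm.2]⟩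
        have h6 : (0:ℝ) ≤ (u - t) ^ 6 := by positivity
        nlinarith [h1, h2, h6])
    rw [intervalIntegral.integral_const_mul, integral_sub_pow_six u] at mono
    linarith [mono]
  have hRhi : ∀ u ∈ Set.Icc (0:ℝ) h, R u ≤ iteratedDeriv 11 g b * u ^ 7 / 2520 := by
    intro u hu
    rw [hRt u]
    have mono := intervalIntegral.integral_mono_on (g := fun t =>
        iteratedDeriv 11 g b / 360 * (u - t) ^ 6)
      (f := fun t => (u - t) ^ 6 / 720 * (iteratedDeriv 11 g (x - t) + iteratedDeriv 11 g (x + t)))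
      (μ := MeasureTheory.volume) hu.1
      (Continuous.intervalIntegrable (by fun_prop) 0 u)
      (Continuous.intervalIntegrable (by fun_prop) 0 u)
      (by
        intro t htm
        have h1 : iteratedDeriv 11 g (x - t) ≤ iteratedDeriv 11 g b :=
          hmax _ ⟨by linarith [hu.2, htm.2], by linarith [htm.1]⟩
        have h2 : iteratedDeriv 11 g (x + t) ≤ iteratedDeriv 11 g b :=
          hmax _ ⟨by linarith [htm.1], by linarith [hu.2, htm.2]⟩
        have h6 : (0:ℝ) ≤ (u - t) ^ 6 := by positivity
        nlinarith [h1, h2, h6])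
    rw [intervalIntegral.integral_const_mul, integral_sub_pow_six u] at mono
    linarith [mono]
  -- polynomial moment integrals
  have hK : (∫ u in (0:ℝ)..h, u ^ 8 * (h - u) ^ 2) = h ^ 11 / 495 := by
    rw [integral_pow_mul_sq]; norm_num [mul_one_div]
  have hI2 : (∫ u in (0:ℝ)..h, u ^ 2 * (h - u) ^ 2) = h ^ 5 / 30 := by
    rw [integral_pow_mul_sq]; norm_num [mul_one_div]
  have hI4 : (∫ u in (0:ℝ)..h, u ^ 4 * (h - u) ^ 2) = h ^ 7 / 105 := by
    rw [integral_pow_mul_sq]; norm_num [mul_one_div]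
  have hI6 : (∫ u in (0:ℝ)..h, u ^ 6 * (h - u) ^ 2) = h ^ 9 / 252 := by
    rw [integral_pow_mul_sq]; norm_num [mul_one_div]
  have hunit4 : (∫ v in (0:ℝ)..1, v ^ 4 * (1 - v) ^ 2) = (1:ℝ) / 105 := by
    rw [integral_pow_mul_sq]; norm_num [mul_one_div]
  have hunit6 : (∫ v in (0:ℝ)..1, v ^ 6 * (1 - v) ^ 2) = (1:ℝ) / 252 := by
    rw [integral_pow_mul_sq]; norm_num [mul_one_div]
  -- the weighted remainder integral J and its bounds
  set J : ℝ := ∫ u in (0:ℝ)..h, u * (h - u) ^ 2 * R u with hJdef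
  have hJlo : iteratedDeriv 11 g a / 2520 * (h ^ 11 / 495) ≤ J := by
    have mono := intervalIntegral.integral_mono_on
      (f := fun u => iteratedDeriv 11 g a / 2520 * (u ^ 8 * (h - u) ^ 2))
      (g := fun u => u * (h - u) ^ 2 * R u) (μ := MeasureTheory.volume) hh
      (Continuous.intervalIntegrable (by fun_prop) 0 h)
      (Continuous.intervalIntegrable (by fun_prop) 0 h)
      (by
        intro u hu
        have h1 := hRlo u hu
        have h0 : (0:ℝ) ≤ u := hu.1
        have hq : (0:ℝ) ≤ u * (h - u) ^ 2 := by positivity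
        calc iteratedDeriv 11 g a / 2520 * (u ^ 8 * (h - u) ^ 2)
            = (u * (h - u) ^ 2) * (iteratedDeriv 11 g a * u ^ 7 / 2520) := by ring
          _ ≤ (u * (h - u) ^ 2) * R u := mul_le_mul_of_nonneg_left h1 hq
          _ = u * (h - u) ^ 2 * R u := by ring)
    rw [intervalIntegral.integral_const_mul, hK] at mono
    rw [hJdef]
    exact mono
  have hJhi : J ≤ iteratedDeriv 11 g b / 2520 * (h ^ 11 / 495) := by
    have mono := intervalIntegral.integral_mono_on
      (g := fun u => iteratedDeriv 11 g b / 2520 * (u ^ 8 * (h - u) ^ 2))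
      (f := fun u => u * (h - u) ^ 2 * R u) (μ := MeasureTheory.volume) hh
      (Continuous.intervalIntegrable (by fun_prop) 0 h)
      (Continuous.intervalIntegrable (by fun_prop) 0 h)
      (by
        intro u hu
        have h1 := hRhi u hu
        have h0 : (0:ℝ) ≤ u := hu.1
        have hq : (0:ℝ) ≤ u * (h - u) ^ 2 := by positivity
        calc u * (h - u) ^ 2 * R u
            = (u * (h - u) ^ 2) * R u := by ring
          _ ≤ (u * (h - u) ^ 2) * (iteratedDeriv 11 g b * u ^ 7 / 2520) :=
              mul_le_mul_of_nonneg_left h1 hq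
          _ = iteratedDeriv 11 g b / 2520 * (u ^ 8 * (h - u) ^ 2) := by ring)
    rw [intervalIntegral.integral_const_mul, hK] at mono
    rw [hJdef]
    exact mono
  -- intermediate value: find the mean point
  have hpow : (0:ℝ) < h ^ 11 := by positivity
  have hh0 : h ≠ 0 := ne_of_gt hpos
  have hVlo : iteratedDeriv 11 g a ≤ 1247400 * J / h ^ 11 := by
    rw [le_div_iff₀ hpow]; nlinarith [hJlo]
  have hVhi : 1247400 * J / h ^ 11 ≤ iteratedDeriv 11 g b := by
    rw [div_le_iff₀ hpow]; nlinarith [hJhi]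
  have hab : iteratedDeriv 11 g a ≤ iteratedDeriv 11 g b := hmin b hbI
  obtain ⟨cp, hcp, hcval⟩ := intermediate_value_uIcc (c11.continuousOn)
    (show 1247400 * J / h ^ 11 ∈ Set.uIcc (iteratedDeriv 11 g a) (iteratedDeriv 11 g b) by
      rw [Set.uIcc_of_le hab]; exact ⟨hVlo, hVhi⟩)
  have hcI : cp ∈ Set.Icc (x - h) (x + h) := Set.uIcc_subset_Icc haI hbI hcp
  -- final assembly
  refine ⟨fun _ => cp, fun _ => cp, fun u _ => ⟨hcI, hcI⟩, ?_⟩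
  have hfin : (∫ u in (0:ℝ)..h,
        (iteratedDeriv 11 g cp + iteratedDeriv 11 g cp) * (u ^ 8 * (h - u) ^ 2))
      = (iteratedDeriv 11 g cp + iteratedDeriv 11 g cp) * (h ^ 11 / 495) := by
    rw [intervalIntegral.integral_const_mul, hK]
  have hsplit : (∫ t in (0:ℝ)..h, (h - t) ^ 2 / 2
        * (-(t / 3) * (iteratedDeriv 4 g (x + t) - iteratedDeriv 4 g (x - t))))
      = -(1/6) * J + (-(iteratedDeriv 5 g x / 3) * (h ^ 5 / 30)
        + (-(iteratedDeriv 7 g x / 18) * (h ^ 7 / 105)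
        + -(iteratedDeriv 9 g x / 360) * (h ^ 9 / 252))) := by
    have e : Set.EqOn (fun t : ℝ => (h - t) ^ 2 / 2
          * (-(t / 3) * (iteratedDeriv 4 g (x + t) - iteratedDeriv 4 g (x - t))))
        (fun t : ℝ => -(1/6) * (t * (h - t) ^ 2 * R t)
          + (-(iteratedDeriv 5 g x / 3) * (t ^ 2 * (h - t) ^ 2)
          + (-(iteratedDeriv 7 g x / 18) * (t ^ 4 * (h - t) ^ 2)
          + -(iteratedDeriv 9 g x / 360) * (t ^ 6 * (h - t) ^ 2))))
        (Set.uIcc (0:ℝ) h) := fun t _ => by simp only [hRdef]; ring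
    have iA : IntervalIntegrable (fun t : ℝ => -(1/6) * (t * (h - t) ^ 2 * R t))
        MeasureTheory.volume 0 h := Continuous.intervalIntegrable (by fun_prop) 0 h
    have iB : IntervalIntegrable
        (fun t : ℝ => -(iteratedDeriv 5 g x / 3) * (t ^ 2 * (h - t) ^ 2))
        MeasureTheory.volume 0 h := Continuous.intervalIntegrable (by fun_prop) 0 h
    have iC : IntervalIntegrable
        (fun t : ℝ => -(iteratedDeriv 7 g x / 18) * (t ^ 4 * (h - t) ^ 2))
        MeasureTheory.volume 0 h := Continuous.intervalIntegrable (by fun_prop) 0 h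
    have iD : IntervalIntegrable
        (fun t : ℝ => -(iteratedDeriv 9 g x / 360) * (t ^ 6 * (h - t) ^ 2))
        MeasureTheory.volume 0 h := Continuous.intervalIntegrable (by fun_prop) 0 h
    rw [intervalIntegral.integral_congr e,
      intervalIntegral.integral_add iA (iB.add (iC.add iD)),
      intervalIntegral.integral_add iB (iC.add iD),
      intervalIntegral.integral_add iC iD,
      intervalIntegral.integral_const_mul, intervalIntegral.integral_const_mul,
      intervalIntegral.integral_const_mul, intervalIntegral.integral_const_mul,
      hI2, hI4, hI6, ← hJdef]
  rw [← iteratedDeriv_one]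
  rw [partA, hsplit]
  simp only []
  rw [hunit4, hunit6, hfin, hcval]
  norm_num [Nat.factorial]
  field_simp
  ring
end
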